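/- arXiv:2402.00314 — 3 statements merged into one kernel-verified Lean document; each statement's English description precedes it below -/
import Mathlib

section
/- Let α > -1, q > 0, and let h : (0,∞) → [0,∞) be a decreasing (antitone) function. Then for every σ > 0 and every κ ∈ (0,1], h(σ)^q ≤ (Γ(α+2)/2^{α+1}) · κ^{-(α+1)} σ^{-(α+1)} e^{2κσ} · ∫_0^∞ h(δ)^q dμ_α(δ), where dμ_α(δ) = (2^{α+1}/Γ(α+1)) δ^α e^{-2δ} dδ. -/
open MeasureTheory

/-- Growth lemma: if `h : (0,∞) → [0,∞)` is decreasing, then for every `σ > 0` and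
`κ ∈ (0,1]`,
`h(σ)^q ≤ (Γ(α+2)/2^{α+1}) κ^{-(α+1)} σ^{-(α+1)} e^{2κσ} ∫_0^∞ h(δ)^q dμ_α(δ)`. -/
theorem growth_lemma (α q : ℝ) (hα : -1 < α) (hq : 0 < q)
    (h : ℝ → ℝ) (hmono : AntitoneOn h (Set.Ioi 0)) (hpos : ∀ σ, 0 ≤ h σ)
    (σ κ : ℝ) (hσ : 0 < σ) (hκ : κ ∈ Set.Ioc (0 : ℝ) 1) :
    ENNReal.ofReal (h σ ^ q) ≤
      ENNReal.ofReal (Real.Gamma (α + 2) / 2 ^ (α + 1) * κ ^ (-(α + 1)) *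
          σ ^ (-(α + 1)) * Real.exp (2 * κ * σ)) *
      ∫⁻ δ in Set.Ioi (0 : ℝ),
        ENNReal.ofReal (h δ ^ q *
          ((2 ^ (α + 1) / Real.Gamma (α + 1)) * δ ^ α * Real.exp (-2 * δ))) := by
  obtain ⟨hκ0, hκ1⟩ := hκ
  set b := κ * σ with hbdef
  have hb : 0 < b := mul_pos hκ0 hσ
  have hbσ : b ≤ σ := by
    calc b = κ * σ := rfl
    _ ≤ 1 * σ := by nlinarith
    _ = σ := one_mul σ
  have hα1 : (0:ℝ) < α + 1 := by linarith
  have hΓpos : 0 < Real.Gamma (α + 1) := Real.Gamma_pos_of_pos hα1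
  have h2pos : (0:ℝ) < (2:ℝ) ^ (α + 1) := Real.rpow_pos_of_pos two_pos _
  -- the constant K
  set K : ℝ := h σ ^ q * ((2 ^ (α + 1) / Real.Gamma (α + 1)) * Real.exp (-2 * b)) with hKdef
  have hK0 : 0 ≤ K :=
    mul_nonneg (Real.rpow_nonneg (hpos σ) _) (by positivity)
  -- Step 1: lower-bound integral by integral over Ioc 0 b of K * δ^α
  have step1 : ∫⁻ δ in Set.Ioc (0:ℝ) b, ENNReal.ofReal (K * δ ^ α) ≤
      ∫⁻ δ in Set.Ioi (0 : ℝ),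
        ENNReal.ofReal (h δ ^ q *
          ((2 ^ (α + 1) / Real.Gamma (α + 1)) * δ ^ α * Real.exp (-2 * δ))) := by
    have h1 : ∫⁻ δ in Set.Ioc (0:ℝ) b, ENNReal.ofReal (K * δ ^ α) ≤
        ∫⁻ δ in Set.Ioc (0:ℝ) b,
          ENNReal.ofReal (h δ ^ q *
            ((2 ^ (α + 1) / Real.Gamma (α + 1)) * δ ^ α * Real.exp (-2 * δ))) := by
      refine setLIntegral_mono' measurableSet_Ioc ?_
      intro δ hδ
      apply ENNReal.ofReal_le_ofReal
      obtain ⟨hδ0, hδb⟩ := hδ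
      have hhq : h σ ^ q ≤ h δ ^ q :=
        Real.rpow_le_rpow (hpos σ) (hmono hδ0 hσ (hδb.trans hbσ)) hq.le
      have hexp : Real.exp (-2 * b) ≤ Real.exp (-2 * δ) := by
        apply Real.exp_le_exp.mpr; nlinarith
      have hδα : (0:ℝ) ≤ δ ^ α := Real.rpow_nonneg hδ0.le _
      calc K * δ ^ α
          = h σ ^ q * ((2 ^ (α + 1) / Real.Gamma (α + 1)) * δ ^ α * Real.exp (-2 * b)) := by
            rw [hKdef]; ring
        _ ≤ h δ ^ q * ((2 ^ (α + 1) / Real.Gamma (α + 1)) * δ ^ α * Real.exp (-2 * δ)) := by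
            apply mul_le_mul hhq ?_ (by positivity) (Real.rpow_nonneg (hpos δ) _)
            apply mul_le_mul_of_nonneg_left hexp (by positivity)
    exact h1.trans (lintegral_mono_set Set.Ioc_subset_Ioi_self)
  -- Step 2: compute that integral
  have hInt : IntegrableOn (fun δ : ℝ => δ ^ α) (Set.Ioc 0 b) :=
    (intervalIntegrable_iff_integrableOn_Ioc_of_le hb.le).mp
      (intervalIntegral.intervalIntegrable_rpow' hα)
  have step2 : ∫⁻ δ in Set.Ioc (0:ℝ) b, ENNReal.ofReal (K * δ ^ α) =
      ENNReal.ofReal (K * (b ^ (α + 1) / (α + 1))) := by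
    have : ∀ δ : ℝ, ENNReal.ofReal (K * δ ^ α) = ENNReal.ofReal K * ENNReal.ofReal (δ ^ α) := by
      intro δ; rw [ENNReal.ofReal_mul hK0]
    simp_rw [this]
    rw [lintegral_const_mul' _ _ ENNReal.ofReal_ne_top]
    have hval : ∫⁻ δ in Set.Ioc (0:ℝ) b, ENNReal.ofReal (δ ^ α) =
        ENNReal.ofReal (b ^ (α + 1) / (α + 1)) := by
      have hnn : 0 ≤ᵐ[volume.restrict (Set.Ioc (0:ℝ) b)] fun δ : ℝ => δ ^ α := by
        filter_upwards [self_mem_ae_restrict measurableSet_Ioc] with δ hδ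
        exact Real.rpow_nonneg hδ.1.le _
      rw [← ofReal_integral_eq_lintegral_ofReal hInt hnn]
      congr 1
      rw [← intervalIntegral.integral_of_le hb.le, integral_rpow (Or.inl hα)]
      rw [Real.zero_rpow (by positivity), sub_zero]
    rw [hval, ← ENNReal.ofReal_mul hK0]
  -- Step 3: algebra
  have key : h σ ^ q = (Real.Gamma (α + 2) / 2 ^ (α + 1) * κ ^ (-(α + 1)) *
      σ ^ (-(α + 1)) * Real.exp (2 * κ * σ)) * (K * (b ^ (α + 1) / (α + 1))) := by
    have hΓ2 : Real.Gamma (α + 2) = (α + 1) * Real.Gamma (α + 1) := by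
      rw [show α + 2 = (α + 1) + 1 by ring, Real.Gamma_add_one hα1.ne']
    have hbrp : b ^ (α + 1) = κ ^ (α + 1) * σ ^ (α + 1) :=
      Real.mul_rpow hκ0.le hσ.le
    have hκn : κ ^ (-(α + 1)) = (κ ^ (α + 1))⁻¹ := Real.rpow_neg hκ0.le _
    have hσn : σ ^ (-(α + 1)) = (σ ^ (α + 1))⁻¹ := Real.rpow_neg hσ.le _
    have hexp : Real.exp (-2 * b) = (Real.exp (2 * κ * σ))⁻¹ := by
      rw [show -2 * b = -(2 * κ * σ) by rw [hbdef]; ring, Real.exp_neg]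
    have hκp : (0:ℝ) < κ ^ (α + 1) := Real.rpow_pos_of_pos hκ0 _
    have hσp : (0:ℝ) < σ ^ (α + 1) := Real.rpow_pos_of_pos hσ _
    have hep : (0:ℝ) < Real.exp (2 * κ * σ) := Real.exp_pos _
    rw [hKdef, hΓ2, hbrp, hκn, hσn, hexp]
    field_simp
  calc ENNReal.ofReal (h σ ^ q)
      = ENNReal.ofReal (Real.Gamma (α + 2) / 2 ^ (α + 1) * κ ^ (-(α + 1)) *
          σ ^ (-(α + 1)) * Real.exp (2 * κ * σ)) *
        ENNReal.ofReal (K * (b ^ (α + 1) / (α + 1))) := by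
        have hΓ2pos : 0 < Real.Gamma (α + 2) := Real.Gamma_pos_of_pos (by linarith)
        have hc : 0 ≤ Real.Gamma (α + 2) / 2 ^ (α + 1) * κ ^ (-(α + 1)) *
            σ ^ (-(α + 1)) * Real.exp (2 * κ * σ) := by
          have h1 : (0:ℝ) ≤ κ ^ (-(α + 1)) := Real.rpow_nonneg hκ0.le _
          have h2 : (0:ℝ) ≤ σ ^ (-(α + 1)) := Real.rpow_nonneg hσ.le _
          have h3 : (0:ℝ) ≤ Real.Gamma (α + 2) / 2 ^ (α + 1) :=
            div_nonneg hΓ2pos.le h2pos.le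
          exact mul_nonneg (mul_nonneg (mul_nonneg h3 h1) h2) (Real.exp_pos _).le
        rw [← ENNReal.ofReal_mul hc, ← key]
    _ ≤ _ := by
        rw [← step2]
        exact mul_le_mul_right step1 _
end

section
/- Let α > -1, q > 0, v > 0, and suppose (α+1)/q < (β+1)/v for some β > -1. If h : (0,∞) → [0,∞) is decreasing and ∫_0^∞ h(σ)^q dμ_α(σ) < ∞, then ∫_0^∞ h(σ)^v dμ_β(σ) < ∞. -/
/-!
Since `h` is decreasing, `h(σ)^q μ_α((0, σ]) ≤ ∫ h^q dμ_α` for every `σ > 0`, and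
`μ_α((0, σ]) ≳ σ^(α+1)` for `σ ≤ 1`; hence `h(σ)^q ≲ σ^(-(α+1))` near `0`. There the
integrand `h^v dμ_β` is dominated by `σ^(β - v(α+1)/q) dσ`, which is integrable precisely
because `(α+1)/q < (β+1)/v`; on `[1, ∞)` it is dominated by `h(1)^v dμ_β`.
-/

open MeasureTheory Set Real

theorem AntitoneOn.rpow_const_of_nonneg {X : Type*} [Preorder X] {f : X → ℝ} {s : Set X}
    {p : ℝ} (hf : AntitoneOn f s) (hf0 : ∀ x, 0 ≤ f x) (hp : 0 ≤ p) :
    AntitoneOn (fun x => f x ^ p) s := fun _ ha _ hb hab =>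
  rpow_le_rpow (hf0 _) (hf ha hb hab) hp

theorem setLIntegral_ofReal_lt_top_of_le {X : Type*} [MeasurableSpace X] {μ : Measure X}
    {s : Set X} {f F : X → ℝ} (hs : MeasurableSet s) (hF : IntegrableOn F s μ)
    (hfF : ∀ x ∈ s, f x ≤ F x) : ∫⁻ x in s, ENNReal.ofReal (f x) ∂μ < ⊤ :=
  (setLIntegral_mono' hs fun x hx => ENNReal.ofReal_le_ofReal (hfF x hx)).trans_lt
    hF.lintegral_lt_top

theorem setLIntegral_Ioc_zero_ofReal_rpow {α σ : ℝ} (hα : -1 < α) (hσ : 0 ≤ σ) :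
    ∫⁻ t in Ioc 0 σ, ENNReal.ofReal (t ^ α) = ENNReal.ofReal (σ ^ (α + 1) / (α + 1)) := by
  rw [← ofReal_integral_eq_lintegral_ofReal (intervalIntegral.intervalIntegrable_rpow' hα).1
    ((ae_restrict_mem measurableSet_Ioc).mono fun t ht => rpow_nonneg ht.1.le _),
    ← intervalIntegral.integral_of_le hσ, integral_rpow (Or.inl hα),
    zero_rpow (by linarith), sub_zero]

theorem AntitoneOn.ofReal_mul_setLIntegral_Ioc_le {g ρ : ℝ → ℝ} {b : ℝ}
    (hg : AntitoneOn g (Ioi 0)) :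
    ENNReal.ofReal (g b) * ∫⁻ t in Ioc 0 b, ENNReal.ofReal (ρ t) ≤
      ∫⁻ t in Ioi 0, ENNReal.ofReal (g t * ρ t) := by
  rw [← lintegral_const_mul' _ _ ENNReal.ofReal_ne_top]
  calc ∫⁻ t in Ioc 0 b, ENNReal.ofReal (g b) * ENNReal.ofReal (ρ t)
      ≤ ∫⁻ t in Ioc 0 b, ENNReal.ofReal (g t * ρ t) := by
        refine setLIntegral_mono' measurableSet_Ioc fun t ⟨ht0, htb⟩ => ?_
        rcases lt_or_ge (ρ t) 0 with hρ | hρ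
        · simp [ENNReal.ofReal_of_nonpos hρ.le]
        rw [← ENNReal.ofReal_mul' hρ]
        exact ENNReal.ofReal_le_ofReal
          (mul_le_mul_of_nonneg_right (hg ht0 (ht0.trans_le htb) htb) hρ)
    _ ≤ _ := lintegral_mono_set Ioc_subset_Ioi_self

theorem AntitoneOn.exists_le_mul_rpow_of_lintegral_ne_top {g ρ : ℝ → ℝ} {α c : ℝ}
    (hg : AntitoneOn g (Ioi 0)) (hα : -1 < α) (hc : 0 < c)
    (hρ : ∀ t ∈ Ioc (0 : ℝ) 1, c * t ^ α ≤ ρ t)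
    (hfin : ∫⁻ t in Ioi 0, ENNReal.ofReal (g t * ρ t) ≠ ⊤) :
    ∃ C, 0 ≤ C ∧ ∀ σ ∈ Ioc (0 : ℝ) 1, g σ ≤ C * σ ^ (-(α + 1)) := by
  set M := ∫⁻ t in Ioi 0, ENNReal.ofReal (g t * ρ t)
  have hα1 : 0 < α + 1 := by linarith
  refine ⟨M.toReal * (α + 1) / c, by positivity, fun σ ⟨hσ0, hσ1⟩ => ?_⟩
  have hmass : ENNReal.ofReal (c * (σ ^ (α + 1) / (α + 1))) ≤
      ∫⁻ t in Ioc 0 σ, ENNReal.ofReal (ρ t) := by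
    rw [ENNReal.ofReal_mul hc.le, ← setLIntegral_Ioc_zero_ofReal_rpow hα hσ0.le,
      ← lintegral_const_mul' _ _ ENNReal.ofReal_ne_top]
    refine setLIntegral_mono' measurableSet_Ioc fun t ht => ?_
    rw [← ENNReal.ofReal_mul hc.le]
    exact ENNReal.ofReal_le_ofReal (hρ t ⟨ht.1, ht.2.trans hσ1⟩)
  have hchebyshev : g σ * (c * (σ ^ (α + 1) / (α + 1))) ≤ M.toReal := by
    rw [← ENNReal.ofReal_le_iff_le_toReal hfin, ENNReal.ofReal_mul' (by positivity)]
    exact (mul_le_mul_right hmass _).trans hg.ofReal_mul_setLIntegral_Ioc_le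
  rw [rpow_neg hσ0.le, ← div_eq_mul_inv, le_div_iff₀ (rpow_pos_of_pos hσ0 _),
    le_div_iff₀ hc]
  calc g σ * σ ^ (α + 1) * c = g σ * (c * (σ ^ (α + 1) / (α + 1))) * (α + 1) := by
        field_simp
    _ ≤ M.toReal * (α + 1) := by gcongr

theorem AntitoneOn.lintegral_ofReal_mul_lt_top {f ρ : ℝ → ℝ} {C K r s : ℝ}
    (hf : AntitoneOn f (Ioi 0)) (hf0 : ∀ σ, 0 ≤ f σ)
    (hfC : ∀ σ ∈ Ioc (0 : ℝ) 1, f σ ≤ C * σ ^ r)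
    (hρ0 : ∀ σ ∈ Ioi (0 : ℝ), 0 ≤ ρ σ)
    (hρ : IntegrableOn ρ (Ioi 1)) (hρK : ∀ σ ∈ Ioc (0 : ℝ) 1, ρ σ ≤ K * σ ^ s)
    (hrs : -1 < r + s) :
    ∫⁻ σ in Ioi 0, ENNReal.ofReal (f σ * ρ σ) < ⊤ := by
  rw [← Ioc_union_Ioi_eq_Ioi zero_le_one,
    lintegral_union measurableSet_Ioi (Ioc_disjoint_Ioi le_rfl)]
  refine ENNReal.add_lt_top.mpr
    ⟨setLIntegral_ofReal_lt_top_of_le (F := fun σ => C * K * σ ^ (r + s))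
      measurableSet_Ioc ?_ fun σ hσ => ?_,
    setLIntegral_ofReal_lt_top_of_le (F := fun σ => f 1 * ρ σ) measurableSet_Ioi
      (hρ.const_mul _) fun σ hσ => ?_⟩
  · exact ((integrableOn_Ioc_iff_integrableOn_Ioo).mpr
      ((intervalIntegral.integrableOn_Ioo_rpow_iff one_pos).mpr hrs)).const_mul _
  · calc f σ * ρ σ ≤ C * σ ^ r * (K * σ ^ s) :=
          mul_le_mul (hfC σ hσ) (hρK σ hσ) (hρ0 σ hσ.1) ((hf0 σ).trans (hfC σ hσ))
      _ = C * K * σ ^ (r + s) := by rw [rpow_add hσ.1]; ring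
  · have hσ0 : (0 : ℝ) < σ := zero_lt_one.trans hσ
    exact mul_le_mul_of_nonneg_right (hf (mem_Ioi.mpr one_pos) hσ0 (le_of_lt hσ)) (hρ0 σ hσ0)

/-- `dμ_γ(σ) = gammaDensity γ σ dσ`. -/
noncomputable def gammaDensity (γ σ : ℝ) : ℝ :=
  2 ^ (γ + 1) / Gamma (γ + 1) * σ ^ γ * exp (-2 * σ)

section gammaDensity

variable {γ : ℝ}

theorem gammaDensity_coeff_pos (hγ : -1 < γ) : 0 < 2 ^ (γ + 1) / Gamma (γ + 1) :=
  div_pos (rpow_pos_of_pos two_pos _) (Gamma_pos_of_pos (by linarith))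

theorem gammaDensity_nonneg (hγ : -1 < γ) {σ : ℝ} (hσ : 0 ≤ σ) :
    0 ≤ gammaDensity γ σ := by
  have := gammaDensity_coeff_pos hγ
  unfold gammaDensity
  positivity

theorem integrableOn_gammaDensity (hγ : -1 < γ) : IntegrableOn (gammaDensity γ) (Ioi 0) := by
  have := (integrableOn_rpow_mul_exp_neg_mul_rpow hγ one_pos two_pos).const_mul
    (2 ^ (γ + 1) / Gamma (γ + 1))
  simp_rw [rpow_one, ← mul_assoc] at this
  exact this

theorem mul_rpow_le_gammaDensity (hγ : -1 < γ) {σ : ℝ} (hσ : σ ∈ Ioc 0 1) :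
    2 ^ (γ + 1) / Gamma (γ + 1) * exp (-2) * σ ^ γ ≤ gammaDensity γ σ := by
  rw [gammaDensity, mul_right_comm, mul_assoc, mul_assoc]
  exact mul_le_mul_of_nonneg_left (mul_le_mul_of_nonneg_left
    (exp_le_exp.mpr (by linarith [hσ.2])) (rpow_nonneg hσ.1.le _)) (gammaDensity_coeff_pos hγ).le

theorem gammaDensity_le_mul_rpow (hγ : -1 < γ) {σ : ℝ} (hσ : 0 ≤ σ) :
    gammaDensity γ σ ≤ 2 ^ (γ + 1) / Gamma (γ + 1) * σ ^ γ := by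
  have := gammaDensity_coeff_pos hγ
  exact mul_le_of_le_one_right (by positivity) (exp_le_one_iff.mpr (by linarith))

end gammaDensity

/-- Sufficiency part (i) of the embedding theorem, abstract form: if `(α+1)/q < (β+1)/v`
and `h : (0,∞) → [0,∞)` is decreasing with `∫_0^∞ h(σ)^q dμ_α(σ) < ∞`, then
`∫_0^∞ h(σ)^v dμ_β(σ) < ∞`. -/
theorem embedding_strict (α β q v : ℝ) (hα : -1 < α) (hβ : -1 < β)
    (hq : 0 < q) (hv : 0 < v) (hlt : (α + 1) / q < (β + 1) / v)
    (h : ℝ → ℝ) (hmono : AntitoneOn h (Set.Ioi 0)) (hpos : ∀ σ, 0 ≤ h σ)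
    (hfin : (∫⁻ σ in Set.Ioi (0 : ℝ),
        ENNReal.ofReal (h σ ^ q *
          ((2 ^ (α + 1) / Real.Gamma (α + 1)) * σ ^ α * Real.exp (-2 * σ)))) < ⊤) :
    (∫⁻ σ in Set.Ioi (0 : ℝ),
        ENNReal.ofReal (h σ ^ v *
          ((2 ^ (β + 1) / Real.Gamma (β + 1)) * σ ^ β * Real.exp (-2 * σ)))) < ⊤ := by
  obtain ⟨C, hC0, hC⟩ :=
    (hmono.rpow_const_of_nonneg hpos hq.le).exists_le_mul_rpow_of_lintegral_ne_top
      (ρ := gammaDensity α) hα (mul_pos (gammaDensity_coeff_pos hα) (exp_pos _))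
      (fun _ => mul_rpow_le_gammaDensity hα) hfin.ne
  have hhv : ∀ σ ∈ Ioc (0 : ℝ) 1, h σ ^ v ≤ C ^ (v / q) * σ ^ (-(α + 1) * (v / q)) := by
    intro σ hσ
    calc h σ ^ v = (h σ ^ q) ^ (v / q) := by
          rw [← rpow_mul (hpos σ), mul_div_cancel₀ _ hq.ne']
      _ ≤ (C * σ ^ (-(α + 1))) ^ (v / q) :=
          rpow_le_rpow (rpow_nonneg (hpos σ) _) (hC σ hσ) (by positivity)
      _ = C ^ (v / q) * σ ^ (-(α + 1) * (v / q)) := by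
          rw [mul_rpow hC0 (rpow_nonneg hσ.1.le _), ← rpow_mul hσ.1.le]
  have hexp : -1 < -(α + 1) * (v / q) + β := by
    have : (α + 1) * v / q < β + 1 := by
      rw [div_lt_div_iff₀ hq hv] at hlt
      rw [div_lt_iff₀ hq]
      linarith
    rw [neg_mul, ← mul_div_assoc]
    linarith
  exact (hmono.rpow_const_of_nonneg hpos hv.le).lintegral_ofReal_mul_lt_top
    (fun σ => rpow_nonneg (hpos σ) _) hhv (fun _ hσ => gammaDensity_nonneg hβ (le_of_lt hσ))
    ((integrableOn_gammaDensity hβ).mono_set (Ioi_subset_Ioi zero_le_one))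
    (fun _ hσ => gammaDensity_le_mul_rpow hβ hσ.1.le) hexp
end

section
/- Let γ > 0 and suppose ξ ∈ ℂ with |ξ| > 1 and |arg ξ| < γπ/4. Set w = 1 - ξ^{-1/γ} (principal branch). Then there is a constant c > 0 depending only on γ such that |1 - w| ≤ c (1 - |w|), i.e., w lies in a Stolz domain with vertex at 1. -/
/-! Put `z = ξ ^ (-1/γ)`, so `1 - w = z`. Then `‖z‖ = ‖ξ‖ ^ (-1/γ) < 1` and `arg z = -arg ξ / γ`
lies in `(-π/4, π/4)`, whence `Re z ≥ ‖z‖ cos (π/4)`. For any `z` in the unit disc with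
`Re z ≥ a‖z‖`, `a > 1/2`, expanding `‖1 - z‖² = 1 - 2 Re z + ‖z‖²` gives
`1 - ‖1 - z‖² ≥ (2a - 1)‖z‖`, and `1 - ‖1 - z‖² ≤ 2 (1 - ‖1 - z‖)`. -/

namespace Complex

theorem sq_norm_one_sub (z : ℂ) : ‖1 - z‖ ^ 2 = 1 - 2 * z.re + ‖z‖ ^ 2 := by
  rw [Complex.sq_norm, Complex.sq_norm, normSq_sub]
  simp only [normSq_one, one_mul, conj_re]
  ring

theorem norm_le_mul_one_sub_norm_one_sub {z : ℂ} {a : ℝ} (ha : 1 / 2 < a) (hz : ‖z‖ ≤ 1)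
    (hre : ‖z‖ * a ≤ z.re) : ‖z‖ ≤ 2 / (2 * a - 1) * (1 - ‖1 - z‖) := by
  have hsq : ‖1 - z‖ ^ 2 ≤ 1 - (2 * a - 1) * ‖z‖ := by
    nlinarith [sq_norm_one_sub z, norm_nonneg z]
  have hle : ‖1 - z‖ ≤ 1 := by
    nlinarith [norm_nonneg (1 - z), norm_nonneg z]
  rw [div_mul_eq_mul_div, le_div_iff₀ (by linarith)]
  nlinarith [norm_nonneg (1 - z)]

theorem re_cpow_ofReal {ξ : ℂ} (hξ : ξ ≠ 0) (t : ℝ) :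
    (ξ ^ (t : ℂ)).re = ‖ξ ^ (t : ℂ)‖ * Real.cos (t * arg ξ) := by
  rw [cpow_def_of_ne_zero hξ, exp_re, norm_exp]
  simp [mul_comm, log_im]

end Complex

open Complex in
/-- Stolz-domain lemma: for `γ > 0` there is `c > 0` (depending only on `γ`) such that
for every `ξ ∈ ℂ` with `|ξ| > 1` and `|arg ξ| < γπ/4`, the point
`w = 1 - ξ^{-1/γ}` (principal branch) satisfies `|1 - w| ≤ c (1 - |w|)`. -/
theorem stolz_domain (γ : ℝ) (hγ : 0 < γ) :
    ∃ c : ℝ, 0 < c ∧ ∀ ξ : ℂ, 1 < ‖ξ‖ → |Complex.arg ξ| < γ * Real.pi / 4 →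
      ‖(1 : ℂ) - (1 - ξ ^ (((-1 / γ : ℝ)) : ℂ))‖ ≤
        c * (1 - ‖(1 : ℂ) - ξ ^ (((-1 / γ : ℝ)) : ℂ)‖) := by
  have hsqrt : 1 / 2 < √2 / 2 := by linarith [Real.one_lt_sqrt_two]
  refine ⟨2 / (2 * (√2 / 2) - 1), div_pos two_pos (by linarith), fun ξ hξ harg => ?_⟩
  have hξ0 : ξ ≠ 0 := norm_pos_iff.mp (one_pos.trans hξ)
  have hnorm : ‖ξ ^ ((-1 / γ : ℝ) : ℂ)‖ ≤ 1 := by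
    rw [norm_cpow_real]
    exact (Real.rpow_lt_one_of_one_lt_of_neg hξ (div_neg_of_neg_of_pos (by norm_num) hγ)).le
  have hangle : |-1 / γ * arg ξ| ≤ Real.pi / 4 := by
    rw [abs_mul, abs_div, abs_neg, abs_one, abs_of_pos hγ, div_mul_eq_mul_div, one_mul,
      div_le_iff₀ hγ]
    linarith
  have hcos : √2 / 2 ≤ Real.cos (-1 / γ * arg ξ) := by
    rw [← Real.cos_abs, ← Real.cos_pi_div_four]
    exact Real.cos_le_cos_of_nonneg_of_le_pi (abs_nonneg _) (by linarith [Real.pi_pos]) hangle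
  rw [sub_sub_cancel]
  refine norm_le_mul_one_sub_norm_one_sub hsqrt hnorm ?_
  rw [re_cpow_ofReal hξ0]
  exact mul_le_mul_of_nonneg_left hcos (norm_nonneg _)
end
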